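/- Let A be a real m×n matrix whose column space has dimension k, let U be a real m×k matrix with orthonormal columns whose columns span the column space of A, let S be a real d×m matrix with rank(SA) = k, and let M be a real n×k matrix such that SAM has orthonormal columns. Then AM has rank k, and the condition number of AM equals the condition number of SU: the largest singular value of AM divided by its smallest singular value equals the largest singular value of SU divided by its smallest singular value. -/

import Mathlib

/-!
As the columns of `U` span the range of `A`, `A = U Uᵀ A`, so `A M = U W` and `S A M = (S U) W`
for the square matrix `W = Uᵀ A M`. Orthonormality of the columns of `S A M` reads
`Wᵀ (S U)ᵀ (S U) W = 1`, so `W` is invertible, `(S U)ᵀ (S U) = (W Wᵀ)⁻¹` and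
`(A M)ᵀ (A M) = Wᵀ W`.
Since `W Wᵀ` and `Wᵀ W` have the same spectrum, the singular values of `S U` are the reciprocals
of those of `A M`; inversion swaps the largest and the smallest, and leaves their ratio unchanged.
-/

open Matrix

namespace Real

lemma sSup_inv_of_finite {s : Set ℝ} (hs : s.Finite) (hpos : ∀ x ∈ s, 0 < x) :
    sSup s⁻¹ = (sInf s)⁻¹ := by
  rcases s.eq_empty_or_nonempty with rfl | hne
  · simp
  have hmin : sInf s ∈ s := hne.csInf_mem hs
  refine IsGreatest.csSup_eq ⟨by simpa using hmin, fun y hy => ?_⟩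
  rw [← inv_inv y]
  exact inv_anti₀ (hpos _ hmin) (csInf_le hs.bddBelow hy)

lemma sInf_inv_of_finite {s : Set ℝ} (hs : s.Finite) (hpos : ∀ x ∈ s, 0 < x) :
    sInf s⁻¹ = (sSup s)⁻¹ := by
  have h := sSup_inv_of_finite hs.inv fun x hx => inv_pos.mp (hpos _ hx)
  rw [inv_inv] at h
  rw [h, inv_inv]

lemma sSup_inv_div_sInf_inv {s : Set ℝ} (hs : s.Finite) (hpos : ∀ x ∈ s, 0 < x) :
    sSup s⁻¹ / sInf s⁻¹ = sSup s / sInf s := by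
  rw [sSup_inv_of_finite hs hpos, sInf_inv_of_finite hs hpos, inv_div_inv]

end Real

namespace Matrix

variable {l m n : Type*} [Fintype l] [Fintype m] [Fintype n] [DecidableEq n]

lemma spectrum_mul_comm {K : Type*} [Field K] (A B : Matrix n n K) :
    spectrum K (A * B) = spectrum K (B * A) := by
  ext
  simp only [mem_spectrum_iff_isRoot_charpoly, charpoly_mul_comm]

lemma spectrum_nonsing_inv {K : Type*} [Field K] {A : Matrix n n K} (hA : IsUnit A) :
    spectrum K A⁻¹ = (spectrum K A)⁻¹ := by
  have h := spectrum.map_inv (𝕜 := K) hA.unit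
  rw [coe_units_inv, hA.unit_spec] at h
  exact h.symm

lemma mul_transpose_mul_eq_self_of_range_le {R : Type*} [CommRing R] {A : Matrix m l R}
    {U : Matrix m n R} (hU : Uᵀ * U = 1)
    (h : LinearMap.range A.mulVecLin ≤ LinearMap.range U.mulVecLin) :
    U * (Uᵀ * A) = A := by
  refine ext_iff_mulVec.mpr fun x => ?_
  obtain ⟨y, hy⟩ := h ⟨x, rfl⟩
  simp only [mulVecLin_apply] at hy
  rw [← mulVec_mulVec, ← mulVec_mulVec, ← hy, mulVec_mulVec _ Uᵀ, hU, one_mulVec]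

lemma eq_inv_mul_transpose_of_transpose_mul_mul_eq_one {R : Type*} [CommRing R]
    {W G : Matrix n n R} (h : Wᵀ * G * W = 1) : G = (W * Wᵀ)⁻¹ := by
  have h' : W * (Wᵀ * G) = 1 := mul_eq_one_comm.mp h
  rw [inv_eq_right_inv (by rwa [Matrix.mul_assoc])]

lemma IsHermitian.range_sqrt_eigenvalues {G : Matrix n n ℝ} (hG : G.IsHermitian) :
    Set.range (fun i => √(hG.eigenvalues i)) = Real.sqrt '' spectrum ℝ G := by
  rw [hG.spectrum_real_eq_range_eigenvalues, ← Set.range_comp]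
  rfl

theorem IsHermitian.sqrt_eigenvalue_ratio_eq_of_spectrum_eq_inv {G H : Matrix n n ℝ}
    (hG : G.IsHermitian) (hH : H.IsHermitian) (hpos : G.PosDef)
    (h : spectrum ℝ H = (spectrum ℝ G)⁻¹) :
    (⨆ i, √(hH.eigenvalues i)) / (⨅ i, √(hH.eigenvalues i)) =
      (⨆ i, √(hG.eigenvalues i)) / (⨅ i, √(hG.eigenvalues i)) := by
  have hrange : Set.range (fun i => √(hH.eigenvalues i)) =
      (Set.range fun i => √(hG.eigenvalues i))⁻¹ := by
    rw [hH.range_sqrt_eigenvalues, hG.range_sqrt_eigenvalues, h, ← Set.image_inv_eq_inv,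
      ← Set.image_inv_eq_inv]
    exact Set.image_comm fun x => Real.sqrt_inv x
  rw [← sSup_range, ← sInf_range, hrange, ← sSup_range, ← sInf_range]
  exact Real.sSup_inv_div_sInf_inv (Set.finite_range _)
    (Set.forall_mem_range.mpr fun i => Real.sqrt_pos.mpr (hpos.eigenvalues_pos i))

end Matrix

theorem cond_preconditioned_eq_cond_sketched_basis_general {m n d k : ℕ}
    (A : Matrix (Fin m) (Fin n) ℝ)
    (U : Matrix (Fin m) (Fin k) ℝ) (hU : Uᵀ * U = 1)
    (hspan : LinearMap.range A.mulVecLin = LinearMap.range U.mulVecLin)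
    (S : Matrix (Fin d) (Fin m) ℝ)
    (M : Matrix (Fin n) (Fin k) ℝ) (hM : (S * A * M)ᵀ * (S * A * M) = 1)
    (hAM : ((A * M)ᵀ * (A * M)).IsHermitian)
    (hSU : ((S * U)ᵀ * (S * U)).IsHermitian) :
    (A * M).rank = k ∧
      (⨆ i, Real.sqrt (hAM.eigenvalues i)) / (⨅ i, Real.sqrt (hAM.eigenvalues i)) =
        (⨆ i, Real.sqrt (hSU.eigenvalues i)) / (⨅ i, Real.sqrt (hSU.eigenvalues i)) := by
  set W := Uᵀ * A * M
  have hAMW : A * M = U * W := by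
    rw [← mul_transpose_mul_eq_self_of_range_le hU hspan.le]
    simp only [W, Matrix.mul_assoc]
  have hGram : (A * M)ᵀ * (A * M) = Wᵀ * W := by
    rw [hAMW, transpose_mul, Matrix.mul_assoc, ← Matrix.mul_assoc Uᵀ, hU, Matrix.one_mul]
  have hSUW : Wᵀ * ((S * U)ᵀ * (S * U)) * W = 1 := by
    rw [← hM, Matrix.mul_assoc S, hAMW, ← Matrix.mul_assoc S, transpose_mul (S * U)]
    simp only [Matrix.mul_assoc]
  have hWunit : IsUnit W := .of_mul_eq_one_right _ hSUW
  have hpos : ((A * M)ᵀ * (A * M)).PosDef := by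
    rw [hGram]
    exact PosDef.conjTranspose_mul_self W (mulVec_injective_iff_isUnit.mpr hWunit)
  refine ⟨?_, (hAM.sqrt_eigenvalue_ratio_eq_of_spectrum_eq_inv hSU hpos ?_).symm⟩
  · rw [← rank_transpose_mul_self, rank_of_isUnit _ hpos.isUnit, Fintype.card_fin]
  · rw [eq_inv_mul_transpose_of_transpose_mul_mul_eq_one hSUW,
      spectrum_nonsing_inv (hWunit.mul ((isUnit_transpose W).mpr hWunit)), hGram, spectrum_mul_comm]

/-- Condition-number consequence of Proposition 3.1: under the hypotheses of the
proposition, `A * M` has full column rank `k` and the condition number of `A * M`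
(the largest singular value divided by the smallest, where the singular values are the
square roots of the eigenvalues of the Gram matrix) equals that of `S * U`. -/
theorem cond_preconditioned_eq_cond_sketched_basis {m n d k : ℕ}
    (A : Matrix (Fin m) (Fin n) ℝ) (hA : A.rank = k)
    (U : Matrix (Fin m) (Fin k) ℝ) (hU : Uᵀ * U = 1)
    (hspan : LinearMap.range A.mulVecLin = LinearMap.range U.mulVecLin)
    (S : Matrix (Fin d) (Fin m) ℝ) (hSA : (S * A).rank = k)
    (M : Matrix (Fin n) (Fin k) ℝ) (hM : (S * A * M)ᵀ * (S * A * M) = 1)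
    (hAM : ((A * M)ᵀ * (A * M)).IsHermitian)
    (hSU : ((S * U)ᵀ * (S * U)).IsHermitian) :
    (A * M).rank = k ∧
      (⨆ i, Real.sqrt (hAM.eigenvalues i)) / (⨅ i, Real.sqrt (hAM.eigenvalues i)) =
        (⨆ i, Real.sqrt (hSU.eigenvalues i)) / (⨅ i, Real.sqrt (hSU.eigenvalues i)) :=
  cond_preconditioned_eq_cond_sketched_basis_general A U hU hspan S M hM hAM hSU
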